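/- arXiv:1310.6712 — 7 statements merged into one kernel-verified Lean document; each statement's English description precedes it below -/
import Mathlib

section
/- Let k be a positive integer, define P(z_1, ..., z_k) = (z_1^k + ⋯ + z_k^k)/k − z_1 ⋯ z_k, and let z_1, ..., z_k be complex numbers in the open unit disk 𝔻. Then |P(z_1, ..., z_{k−1}, z_k) − P(z_1, ..., z_{k−1}, z_1)| ≤ (k−1) · max_{i,j ∈ {1,...,k}} |z_i − z_j|^2. -/
noncomputable def P (k : ℕ) (z : Fin k → ℂ) : ℂ :=
  (∑ j, z j ^ k) / (k : ℂ) - ∏ j, z j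

/-!
Write `a = z_k`, `b = z_1`, `Q = z_1 ⋯ z_{k-1}` and `M = max |z_i - z_j|`. Factoring `a^k - b^k`
gives `P(z) - P(z_1, …, z_{k-1}, b) = (a - b) (mean_{0 ≤ i < k} a^i b^{k-1-i} - Q)`. Each monomial
`a^i b^{k-1-i}` and `Q` are products of `k - 1` factors in the closed unit disk whose corresponding
factors differ by at most `M`, so telescoping gives `|a^i b^{k-1-i} - Q| ≤ (k - 1) M`, and the
claim follows from `|a - b| ≤ M`.
-/

open Finset

section ProductBounds

variable {ι R : Type*} [NormedCommRing R] [NormOneClass R]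

theorem norm_prod_sub_prod_le_sum_norm_sub (s : Finset ι) {u v : ι → R}
    (hu : ∀ i ∈ s, ‖u i‖ ≤ 1) (hv : ∀ i ∈ s, ‖v i‖ ≤ 1) :
    ‖∏ i ∈ s, u i - ∏ i ∈ s, v i‖ ≤ ∑ i ∈ s, ‖u i - v i‖ := by
  classical
  induction s using Finset.induction with
  | empty => simp
  | @insert a s ha ih =>
    have hu' : ∀ i ∈ s, ‖u i‖ ≤ 1 := fun i hi => hu i (mem_insert_of_mem hi)
    have hv' : ∀ i ∈ s, ‖v i‖ ≤ 1 := fun i hi => hv i (mem_insert_of_mem hi)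
    have hprod_v : ‖∏ i ∈ s, v i‖ ≤ 1 :=
      (norm_prod_le s v).trans (prod_le_one (fun _ _ => norm_nonneg _) hv')
    rw [prod_insert ha, prod_insert ha, sum_insert ha]
    calc ‖u a * ∏ i ∈ s, u i - v a * ∏ i ∈ s, v i‖
        = ‖u a * (∏ i ∈ s, u i - ∏ i ∈ s, v i) + (u a - v a) * ∏ i ∈ s, v i‖ := by
          congr 1; ring
      _ ≤ ‖u a‖ * ‖∏ i ∈ s, u i - ∏ i ∈ s, v i‖ + ‖u a - v a‖ * ‖∏ i ∈ s, v i‖ :=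
          (norm_add_le _ _).trans (add_le_add (norm_mul_le _ _) (norm_mul_le _ _))
      _ ≤ 1 * ∑ i ∈ s, ‖u i - v i‖ + ‖u a - v a‖ * 1 := by
          gcongr
          · exact hu a (mem_insert_self a s)
          · exact ih hu' hv'
      _ = ‖u a - v a‖ + ∑ i ∈ s, ‖u i - v i‖ := by ring

theorem norm_pow_mul_pow_sub_prod_le {s : Finset ι} {a b : R} {y : ι → R} {M : ℝ}
    (ha : ‖a‖ ≤ 1) (hb : ‖b‖ ≤ 1) (hy : ∀ j ∈ s, ‖y j‖ ≤ 1)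
    (hay : ∀ j ∈ s, ‖a - y j‖ ≤ M) (hby : ∀ j ∈ s, ‖b - y j‖ ≤ M) {i : ℕ} (hi : i ≤ #s) :
    ‖a ^ i * b ^ (#s - i) - ∏ j ∈ s, y j‖ ≤ #s * M := by
  classical
  -- split `s` into the `i` factors equal to `a` and the `#s - i` factors equal to `b`
  obtain ⟨t, hts, rfl⟩ := exists_subset_card_eq hi
  have hmonomial :
      a ^ #t * b ^ (#s - #t) = ∏ j ∈ s, t.piecewise (fun _ => a) (fun _ => b) j := by
    rw [prod_piecewise, inter_eq_right.mpr hts, prod_const, prod_const,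
      card_sdiff_of_subset hts]
  rw [hmonomial, ← nsmul_eq_mul]
  refine (norm_prod_sub_prod_le_sum_norm_sub s (fun j _ => ?_) hy).trans
    (sum_le_card_nsmul _ _ _ fun j hj => ?_)
  · by_cases hj : j ∈ t <;> simp [hj, ha, hb]
  · by_cases hjt : j ∈ t <;> simp [hjt, hay j hj, hby j hj]

end ProductBounds

theorem norm_sum_div_card_sub_le {ι 𝕜 : Type*} [RCLike 𝕜] {s : Finset ι} (hs : s.Nonempty)
    {x : ι → 𝕜} {c : 𝕜} {C : ℝ} (h : ∀ i ∈ s, ‖x i - c‖ ≤ C) :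
    ‖(∑ i ∈ s, x i) / #s - c‖ ≤ C := by
  have hcard : (#s : 𝕜) ≠ 0 := Nat.cast_ne_zero.mpr hs.card_ne_zero
  have hmean : (∑ i ∈ s, x i) / #s - c = (∑ i ∈ s, (x i - c)) / #s := by
    rw [sum_sub_distrib, sum_const, nsmul_eq_mul]
    field_simp
  rw [hmean, norm_div, RCLike.norm_natCast, div_le_iff₀ (by exact_mod_cast hs.card_pos),
    mul_comm, ← nsmul_eq_mul]
  exact (norm_sum_le _ _).trans (sum_le_card_nsmul _ _ _ h)

theorem P_sub_P_update_last (n : ℕ) (z : Fin (n + 1) → ℂ) (b : ℂ) :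
    P (n + 1) z - P (n + 1) (Function.update z (Fin.last n) b) =
      (z (Fin.last n) - b) *
        ((∑ i ∈ range (n + 1), z (Fin.last n) ^ i * b ^ (n - i)) / (n + 1 : ℂ) -
          ∏ j : Fin n, z j.castSucc) := by
  set a := z (Fin.last n)
  have hpowers : ∑ j, z j ^ (n + 1) - ∑ j, Function.update z (Fin.last n) b j ^ (n + 1) =
      a ^ (n + 1) - b ^ (n + 1) := by
    simp [Fin.sum_univ_castSucc, a]
  have hprod : ∏ j, Function.update z (Fin.last n) b j = (∏ j : Fin n, z j.castSucc) * b := by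
    simp [Fin.prod_univ_castSucc]
  have hgeom :
      (∑ i ∈ range (n + 1), a ^ i * b ^ (n - i)) * (a - b) = a ^ (n + 1) - b ^ (n + 1) := by
    simpa using geom_sum₂_mul a b (n + 1)
  unfold P
  rw [sub_sub_sub_comm, div_sub_div_same, hpowers, hprod, Fin.prod_univ_castSucc, ← hgeom]
  push_cast
  field_simp
  ring

theorem norm_P_sub_P_update_last_le (n : ℕ) (z : Fin (n + 1) → ℂ) (hz : ∀ j, ‖z j‖ ≤ 1)
    {M : ℝ} (hM : ∀ i j, ‖z i - z j‖ ≤ M) (m : Fin (n + 1)) :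
    ‖P (n + 1) z - P (n + 1) (Function.update z (Fin.last n) (z m))‖ ≤ n * M ^ 2 := by
  set a := z (Fin.last n)
  set b := z m
  have hterm : ∀ i ∈ range (n + 1),
      ‖a ^ i * b ^ (n - i) - ∏ j : Fin n, z j.castSucc‖ ≤ n * M := by
    intro i hi
    have hi' : i ≤ #(univ : Finset (Fin n)) := by
      rw [card_fin]; exact Nat.lt_succ_iff.mp (mem_range.mp hi)
    have := norm_pow_mul_pow_sub_prod_le (hz (Fin.last n)) (hz m)
      (fun j _ => hz j.castSucc) (fun j _ => hM _ _) (fun j _ => hM _ _) hi'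
    rwa [card_fin] at this
  have hmean := norm_sum_div_card_sub_le nonempty_range_add_one hterm
  rw [card_range, Nat.cast_succ] at hmean
  rw [P_sub_P_update_last, norm_mul]
  calc ‖a - b‖ * ‖(∑ i ∈ range (n + 1), a ^ i * b ^ (n - i)) / (n + 1 : ℂ) -
        ∏ j : Fin n, z j.castSucc‖
      ≤ M * (n * M) := mul_le_mul (hM _ _) hmean (norm_nonneg _) ((norm_nonneg _).trans (hM m m))
    _ = n * M ^ 2 := by ring

/-- If `z_1, …, z_k` lie in the open unit disk, then
`|P(z_1, …, z_{k−1}, z_k) − P(z_1, …, z_{k−1}, z_1)| ≤ (k−1) · max_{i,j} |z_i − z_j|²`. -/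
theorem stmt_3 (k : ℕ) (hk : 0 < k) (z : Fin k → ℂ)
    (hz : ∀ j, ‖z j‖ < 1) :
    ‖P k z -
        P k (Function.update z ⟨k - 1, Nat.sub_lt hk Nat.one_pos⟩ (z ⟨0, hk⟩))‖ ≤
      ((k - 1 : ℕ) : ℝ) *
        Finset.univ.sup'
          (Finset.univ_nonempty_iff.mpr
            (nonempty_prod.mpr ⟨Fin.pos_iff_nonempty.mp hk, Fin.pos_iff_nonempty.mp hk⟩))
          (fun p : Fin k × Fin k => ‖z p.1 - z p.2‖ ^ 2) := by
  obtain ⟨n, rfl⟩ : ∃ n, k = n + 1 := ⟨k - 1, (Nat.succ_pred_eq_of_pos hk).symm⟩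
  obtain ⟨p, -, hp⟩ :=
    exists_mem_eq_sup' _ (fun p : Fin (n + 1) × Fin (n + 1) => ‖z p.1 - z p.2‖ ^ 2)
  have hM : ∀ i j, ‖z i - z j‖ ≤ ‖z p.1 - z p.2‖ := fun i j =>
    (pow_le_pow_iff_left₀ (norm_nonneg _) (norm_nonneg _) two_ne_zero).mp
      (hp ▸ le_sup' (fun p : Fin (n + 1) × Fin (n + 1) => ‖z p.1 - z p.2‖ ^ 2) (mem_univ (i, j)))
  rw [hp]
  exact norm_P_sub_P_update_last_le n z (fun j => (hz j).le) hM 0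
end

section
/- Let k be a positive integer and let z_1, ..., z_k be complex numbers in the open unit disk 𝔻. Then |(z_1^k + ⋯ + z_k^k)/k − z_1 ⋯ z_k| ≤ (k−1)^2 · max_{i,j ∈ {1,...,k}} |z_i − z_j|^2. -/
/-!
Index the points cyclically by `Fin k` and interpolate between `∑ zⱼᵏ` and `k ∏ zⱼ` through the
sums `S t = ∑ⱼ zⱼ ^ (k - t) · zⱼ₊₁ ⋯ zⱼ₊ₜ`, `t = 0, …, k - 1`. Passing from `t` to `t + 1` replaces
one factor `zⱼ` by `zⱼ₊ₜ₊₁`, so `S t - S (t + 1) = ∑ⱼ cⱼ (zⱼ - zⱼ₊ₜ₊₁)` with monomials `cⱼ` of degree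
`k - 1`. Since `∑ⱼ (zⱼ - zⱼ₊ₜ₊₁) = 0`, each `cⱼ` may be replaced by `cⱼ - c₀`, a difference of two
products of `k - 1` points of the disk, hence of size at most `(k - 1) M`, where `M` bounds all
`|zᵢ - zⱼ|`. Each of the `k - 1` steps therefore costs at most `k (k - 1) M²`.
-/

open Finset Fin.NatCast

theorem norm_mul_sub_mul_le {R : Type*} [SeminormedRing R] {a b c d : R}
    (hb : ‖b‖ ≤ 1) (hc : ‖c‖ ≤ 1) : ‖a * b - c * d‖ ≤ ‖a - c‖ + ‖b - d‖ :=
  calc ‖a * b - c * d‖ = ‖(a - c) * b + c * (b - d)‖ := by noncomm_ring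
    _ ≤ ‖a - c‖ * ‖b‖ + ‖c‖ * ‖b - d‖ := (norm_add_le _ _).trans (add_le_add
          (norm_mul_le _ _) (norm_mul_le _ _))
    _ ≤ ‖a - c‖ + ‖b - d‖ := by
          gcongr
          · exact mul_le_of_le_one_right (norm_nonneg _) hb
          · exact mul_le_of_le_one_left (norm_nonneg _) hc

section NormedCommRing

variable {R : Type*} [NormedCommRing R] [NormOneClass R]

theorem norm_prod_le_one {ι : Type*} {s : Finset ι} {f : ι → R} (hf : ∀ i ∈ s, ‖f i‖ ≤ 1) :
    ‖∏ i ∈ s, f i‖ ≤ 1 :=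
  (Finset.norm_prod_le s f).trans (prod_le_one (fun _ _ ↦ norm_nonneg _) hf)

theorem norm_prod_sub_prod_le {ι : Type*} (s : Finset ι) {f g : ι → R}
    (hf : ∀ i ∈ s, ‖f i‖ ≤ 1) (hg : ∀ i ∈ s, ‖g i‖ ≤ 1) :
    ‖∏ i ∈ s, f i - ∏ i ∈ s, g i‖ ≤ ∑ i ∈ s, ‖f i - g i‖ := by
  induction s using Finset.cons_induction with
  | empty => simp
  | cons a s ha ih =>
    rw [prod_cons, prod_cons, sum_cons]
    have hf' : ∀ i ∈ s, ‖f i‖ ≤ 1 := fun i hi ↦ hf i (mem_cons_of_mem hi)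
    have hg' : ∀ i ∈ s, ‖g i‖ ≤ 1 := fun i hi ↦ hg i (mem_cons_of_mem hi)
    exact (norm_mul_sub_mul_le (norm_prod_le_one hf') (hg a (mem_cons_self a s))).trans
      (add_le_add_right (ih hf' hg') _)

theorem norm_pow_sub_pow_le {x y : R} (hx : ‖x‖ ≤ 1) (hy : ‖y‖ ≤ 1) (n : ℕ) :
    ‖x ^ n - y ^ n‖ ≤ n * ‖x - y‖ := by
  simpa using norm_prod_sub_prod_le (range n) (f := fun _ ↦ x) (g := fun _ ↦ y)
    (fun _ _ ↦ hx) (fun _ _ ↦ hy)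

end NormedCommRing

theorem sum_mul_sub_shift_eq_sum_sub_mul {G R : Type*} [AddCommGroup G] [Fintype G] [CommRing R]
    (a z : G → R) (d j₀ : G) :
    ∑ j, a j * (z j - z (j + d)) = ∑ j, (a j - a j₀) * (z j - z (j + d)) := by
  have hshift : ∑ j, (z j - z (j + d)) = 0 := by
    rw [sum_sub_distrib, ← Equiv.sum_comp (Equiv.addRight d) z]
    exact sub_self _
  simp only [sub_mul, sum_sub_distrib, ← mul_sum, hshift, mul_zero, sub_zero]

namespace Fin

variable {k : ℕ} [NeZero k] {M : Type*} [CommMonoid M]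

theorem prod_range_add_natCast (z : Fin k → M) (j : Fin k) :
    ∏ s ∈ range k, z (j + s) = ∏ i, z i := by
  rw [← prod_univ_eq_prod_range (fun s ↦ z (j + s))]
  simp only [cast_val_eq_self]
  exact Equiv.prod_comp (Equiv.addLeft j) z

end Fin

section CyclicWord

variable {k : ℕ} [NeZero k] {M : Type*} [CommMonoid M]

def cyclicWord (z : Fin k → M) (t : ℕ) (j : Fin k) : M :=
  z j ^ (k - 1 - t) * ∏ s ∈ range t, z (j + (s + 1 : ℕ))

theorem mul_cyclicWord_zero (z : Fin k → M) (j : Fin k) : z j * cyclicWord z 0 j = z j ^ k := by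
  rw [cyclicWord, prod_range_zero, mul_one, Nat.sub_zero, ← pow_succ',
    Nat.sub_add_cancel NeZero.one_le]

theorem mul_cyclicWord_last (z : Fin k → M) (j : Fin k) :
    z j * cyclicWord z (k - 1) j = ∏ i, z i := by
  rw [cyclicWord, Nat.sub_self, pow_zero, one_mul, ← Fin.prod_range_add_natCast z j,
    show range k = range (k - 1 + 1) by rw [Nat.sub_add_cancel NeZero.one_le],
    prod_range_succ', Nat.cast_zero, add_zero, mul_comm]

theorem mul_cyclicWord_succ (z : Fin k → M) {t : ℕ} (ht : t < k - 1) (j : Fin k) :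
    z j * cyclicWord z (t + 1) j = cyclicWord z t j * z (j + (t + 1 : ℕ)) := by
  rw [cyclicWord, cyclicWord, prod_range_succ,
    show k - 1 - t = k - 1 - (t + 1) + 1 by omega, pow_succ]
  ac_rfl

end CyclicWord

section CyclicInequality

variable {R : Type*} [NormedCommRing R] [NormOneClass R] {k : ℕ} [NeZero k] {z : Fin k → R}
  {M : ℝ}

theorem norm_cyclicWord_sub_le (hz : ∀ j, ‖z j‖ ≤ 1) (hM : ∀ i j, ‖z i - z j‖ ≤ M) {t : ℕ}
    (ht : t ≤ k - 1) (i j : Fin k) :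
    ‖cyclicWord z t i - cyclicWord z t j‖ ≤ (k - 1 : ℕ) * M := by
  have hprod : ∀ j, ∀ s ∈ range t, ‖z (j + (s + 1 : ℕ))‖ ≤ 1 := fun _ _ _ ↦ hz _
  calc ‖cyclicWord z t i - cyclicWord z t j‖
      ≤ ‖z i ^ (k - 1 - t) - z j ^ (k - 1 - t)‖
        + ‖∏ s ∈ range t, z (i + (s + 1 : ℕ)) - ∏ s ∈ range t, z (j + (s + 1 : ℕ))‖ :=
        norm_mul_sub_mul_le (norm_prod_le_one (hprod i))
          ((norm_pow_le _ _).trans (pow_le_one₀ (norm_nonneg _) (hz j)))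
    _ ≤ (k - 1 - t : ℕ) * M + ∑ _s ∈ range t, M := by
        gcongr
        · exact (norm_pow_sub_pow_le (hz i) (hz j) _).trans (by gcongr; exact hM i j)
        · exact (norm_prod_sub_prod_le _ (hprod i) (hprod j)).trans
            (sum_le_sum fun _ _ ↦ hM _ _)
    _ = (k - 1 : ℕ) * M := by
        rw [sum_const, card_range, nsmul_eq_mul, ← add_mul, ← Nat.cast_add,
          Nat.sub_add_cancel ht]

theorem norm_sum_cyclicWord_sub_succ_le (hz : ∀ j, ‖z j‖ ≤ 1) (hM : ∀ i j, ‖z i - z j‖ ≤ M)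
    {t : ℕ} (ht : t < k - 1) :
    ‖∑ j, z j * cyclicWord z t j - ∑ j, z j * cyclicWord z (t + 1) j‖
      ≤ k * ((k - 1 : ℕ) * M * M) := by
  have hdiff : ∑ j, z j * cyclicWord z t j - ∑ j, z j * cyclicWord z (t + 1) j
      = ∑ j, (cyclicWord z t j - cyclicWord z t 0) * (z j - z (j + (t + 1 : ℕ))) := by
    rw [← sum_mul_sub_shift_eq_sum_sub_mul, ← sum_sub_distrib]
    refine sum_congr rfl fun j _ ↦ ?_
    rw [mul_cyclicWord_succ z ht]
    ring
  rw [hdiff]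
  calc _ ≤ ∑ j, ‖(cyclicWord z t j - cyclicWord z t 0) * (z j - z (j + (t + 1 : ℕ)))‖ :=
        norm_sum_le _ _
    _ ≤ ∑ _j : Fin k, (k - 1 : ℕ) * M * M := by
        gcongr with j
        refine (norm_mul_le _ _).trans (mul_le_mul (norm_cyclicWord_sub_le hz hM ht.le j 0)
          (hM _ _) (norm_nonneg _) ?_)
        exact mul_nonneg (Nat.cast_nonneg _) ((norm_nonneg _).trans (hM 0 0))
    _ = k * ((k - 1 : ℕ) * M * M) := by simp

theorem norm_sum_pow_sub_mul_prod_le (hz : ∀ j, ‖z j‖ ≤ 1) (hM : ∀ i j, ‖z i - z j‖ ≤ M) :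
    ‖∑ j, z j ^ k - k * ∏ j, z j‖ ≤ k * ((k - 1 : ℕ) : ℝ) ^ 2 * M ^ 2 := by
  set S : ℕ → R := fun t ↦ ∑ j, z j * cyclicWord z t j
  have hS0 : S 0 = ∑ j, z j ^ k := sum_congr rfl fun j _ ↦ mul_cyclicWord_zero z j
  have hSlast : S (k - 1) = k * ∏ j, z j := by
    simp [S, mul_cyclicWord_last]
  rw [← hS0, ← hSlast, ← sum_range_sub' S]
  calc _ ≤ ∑ t ∈ range (k - 1), ‖S t - S (t + 1)‖ := norm_sum_le _ _
    _ ≤ ∑ _t ∈ range (k - 1), k * ((k - 1 : ℕ) * M * M) :=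
        sum_le_sum fun t ht ↦ norm_sum_cyclicWord_sub_succ_le hz hM (mem_range.mp ht)
    _ = k * ((k - 1 : ℕ) : ℝ) ^ 2 * M ^ 2 := by
        rw [sum_const, card_range, nsmul_eq_mul]
        ring

end CyclicInequality

/-- If `z_1, …, z_k` lie in the open unit disk, then
`|(z_1^k + ⋯ + z_k^k)/k − z_1 ⋯ z_k| ≤ (k−1)² · max_{i,j} |z_i − z_j|²`. -/
theorem stmt_4 (k : ℕ) (hk : 0 < k) (z : Fin k → ℂ)
    (hz : ∀ j, ‖z j‖ < 1) :
    ‖(∑ j, z j ^ k) / (k : ℂ) - ∏ j, z j‖ ≤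
      ((k - 1 : ℕ) : ℝ) ^ 2 *
        Finset.univ.sup'
          (Finset.univ_nonempty_iff.mpr
            (nonempty_prod.mpr ⟨Fin.pos_iff_nonempty.mp hk, Fin.pos_iff_nonempty.mp hk⟩))
          (fun p : Fin k × Fin k => ‖z p.1 - z p.2‖ ^ 2) := by
  have : NeZero k := ⟨hk.ne'⟩
  set D := Finset.univ.sup' _ (fun p : Fin k × Fin k => ‖z p.1 - z p.2‖ ^ 2)
  have hD : ∀ i j, ‖z i - z j‖ ^ 2 ≤ D := fun i j ↦
    le_sup' (fun p : Fin k × Fin k => ‖z p.1 - z p.2‖ ^ 2) (mem_univ (i, j))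
  have hbound := norm_sum_pow_sub_mul_prod_le (fun j ↦ (hz j).le)
    (fun i j ↦ Real.le_sqrt_of_sq_le (hD i j))
  rw [Real.sq_sqrt ((sq_nonneg _).trans (hD 0 0))] at hbound
  have hk' : (0 : ℝ) < k := Nat.cast_pos.mpr hk
  rw [← mul_div_cancel_left₀ (∏ j, z j) (Nat.cast_ne_zero.mpr hk.ne' : (k : ℂ) ≠ 0),
    ← sub_div, norm_div, Complex.norm_natCast, div_le_iff₀ hk']
  linarith
end

section
/- Let k, l be positive integers, let t = (t_1, ..., t_{2k}) be a tuple with each t_i ∈ {0, 1, ..., l}, and let α : ℕ → ℂ be a sequence with |α_n| < 1 for all n. For each n ∈ ℕ set β_n = ∏_{j=1}^{k} α_{n+t_{2j−1}} and β'_n = ∏_{j=1}^{k} α_{n+t_{2j}}. Then |β_n − β'_n|^2 ≤ k^2 · l · Σ_{q=0}^{l−1} |α_{n+q+1} − α_{n+q}|^2, and consequently |β_n|^2 + |β'_n|^2 − 2 Re(β_n · conj(β'_n)) ≤ k^2 · l · Σ_{q=0}^{l−1} |α_{n+q+1} − α_{n+q}|^2. -/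
/-! Both products have factors in the closed unit disc, so swapping one factor at a time shows
`‖β_n − β'_n‖ ≤ Σ_j ‖α_{n+t_{2j}} − α_{n+t_{2j+1}}‖`. Each of these `k` terms telescopes along
`n, n+1, …, n+l`, hence is at most `S = Σ_{q<l} ‖α_{n+q+1} − α_{n+q}‖`, and Cauchy–Schwarz gives
`S² ≤ l Σ_{q<l} ‖α_{n+q+1} − α_{n+q}‖²`. The second inequality is the first one rewritten by
`|z − w|² = |z|² + |w|² − 2 Re(z w̄)`. -/

open Finset

theorem norm_prod_sub_prod_le_sum_norm_sub_s6 {ι R : Type*} [NormedCommRing R] [NormOneClass R]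
    (s : Finset ι) {a b : ι → R} (ha : ∀ i ∈ s, ‖a i‖ ≤ 1) (hb : ∀ i ∈ s, ‖b i‖ ≤ 1) :
    ‖∏ i ∈ s, a i - ∏ i ∈ s, b i‖ ≤ ∑ i ∈ s, ‖a i - b i‖ := by
  classical
  induction s using Finset.induction_on with
  | empty => simp
  | insert i s hi ih =>
    simp only [forall_mem_insert] at ha hb
    obtain ⟨hai, ha⟩ := ha
    obtain ⟨-, hb⟩ := hb
    rw [prod_insert hi, prod_insert hi, sum_insert hi]
    have hprod_b : ‖∏ j ∈ s, b j‖ ≤ 1 :=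
      (s.norm_prod_le b).trans (prod_le_one (fun _ _ ↦ norm_nonneg _) hb)
    calc ‖a i * ∏ j ∈ s, a j - b i * ∏ j ∈ s, b j‖
        = ‖a i * (∏ j ∈ s, a j - ∏ j ∈ s, b j) + (a i - b i) * ∏ j ∈ s, b j‖ := by ring_nf
      _ ≤ ‖a i‖ * ‖∏ j ∈ s, a j - ∏ j ∈ s, b j‖ + ‖a i - b i‖ * ‖∏ j ∈ s, b j‖ :=
        (norm_add_le _ _).trans (add_le_add (norm_mul_le _ _) (norm_mul_le _ _))
      _ ≤ 1 * ∑ j ∈ s, ‖a j - b j‖ + ‖a i - b i‖ * 1 := by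
        gcongr
        exact ih ha hb
      _ = ‖a i - b i‖ + ∑ j ∈ s, ‖a j - b j‖ := by ring

theorem norm_sub_le_sum_range_norm_sub_succ {E : Type*} [SeminormedAddCommGroup E] (f : ℕ → E)
    {a b l : ℕ} (ha : a ≤ l) (hb : b ≤ l) :
    ‖f a - f b‖ ≤ ∑ q ∈ range l, ‖f (q + 1) - f q‖ := by
  wlog hab : a ≤ b generalizing a b
  · rw [norm_sub_rev]
    exact this hb ha (le_of_not_ge hab)
  calc ‖f a - f b‖ = dist (f a) (f b) := (dist_eq_norm _ _).symm
    _ ≤ ∑ q ∈ Ico a b, dist (f q) (f (q + 1)) := dist_le_Ico_sum_dist f hab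
    _ ≤ ∑ q ∈ range l, dist (f q) (f (q + 1)) :=
      sum_le_sum_of_subset_of_nonneg
        (fun q hq ↦ mem_range.2 ((mem_Ico.1 hq).2.trans_le hb)) (fun _ _ _ ↦ dist_nonneg)
    _ = ∑ q ∈ range l, ‖f (q + 1) - f q‖ := by simp_rw [dist_eq_norm']

theorem stmt_6_general (k l : ℕ) (t : ℕ → ℕ)
    (ht : ∀ i < 2 * k, t i ≤ l) (α : ℕ → ℂ) (hα : ∀ n, ‖α n‖ < 1)
    (n : ℕ) :
    ‖(∏ j ∈ Finset.range k, α (n + t (2 * j))) -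
          ∏ j ∈ Finset.range k, α (n + t (2 * j + 1))‖ ^ 2 ≤
        (k : ℝ) ^ 2 * l * ∑ q ∈ Finset.range l, ‖α (n + q + 1) - α (n + q)‖ ^ 2 ∧
      ‖∏ j ∈ Finset.range k, α (n + t (2 * j))‖ ^ 2 +
          ‖∏ j ∈ Finset.range k, α (n + t (2 * j + 1))‖ ^ 2 -
          2 * ((∏ j ∈ Finset.range k, α (n + t (2 * j))) *
            (starRingEnd ℂ) (∏ j ∈ Finset.range k, α (n + t (2 * j + 1)))).re ≤
        (k : ℝ) ^ 2 * l * ∑ q ∈ Finset.range l, ‖α (n + q + 1) - α (n + q)‖ ^ 2 := by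
  set β := ∏ j ∈ range k, α (n + t (2 * j))
  set β' := ∏ j ∈ range k, α (n + t (2 * j + 1))
  set S := ∑ q ∈ range l, ‖α (n + q + 1) - α (n + q)‖
  have hfactor : ∀ j ∈ range k, ‖α (n + t (2 * j)) - α (n + t (2 * j + 1))‖ ≤ S := by
    intro j hj
    have hjk := mem_range.1 hj
    exact norm_sub_le_sum_range_norm_sub_succ (fun q ↦ α (n + q)) (ht _ (by omega)) (ht _ (by omega))
  have hdiff : ‖β - β'‖ ≤ k * S := by
    calc ‖β - β'‖ ≤ ∑ j ∈ range k, ‖α (n + t (2 * j)) - α (n + t (2 * j + 1))‖ :=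
          norm_prod_sub_prod_le_sum_norm_sub_s6 _ (fun _ _ ↦ (hα _).le) (fun _ _ ↦ (hα _).le)
      _ ≤ ∑ _j ∈ range k, S := sum_le_sum hfactor
      _ = k * S := by rw [sum_const, card_range, nsmul_eq_mul]
  have hCS : S ^ 2 ≤ l * ∑ q ∈ range l, ‖α (n + q + 1) - α (n + q)‖ ^ 2 := by
    simpa using sq_sum_le_card_mul_sum_sq (s := range l)
      (f := fun q ↦ ‖α (n + q + 1) - α (n + q)‖)
  have hfirst : ‖β - β'‖ ^ 2 ≤ (k : ℝ) ^ 2 * l * ∑ q ∈ range l, ‖α (n + q + 1) - α (n + q)‖ ^ 2 :=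
    calc ‖β - β'‖ ^ 2 ≤ (k * S) ^ 2 := by gcongr
      _ = (k : ℝ) ^ 2 * S ^ 2 := by ring
      _ ≤ _ := by rw [mul_assoc]; gcongr
  refine ⟨hfirst, ?_⟩
  rwa [Complex.sq_norm, Complex.sq_norm, ← Complex.normSq_sub, ← Complex.sq_norm]

/-- With `β_n = ∏_{j=1}^k α_{n+t_{2j−1}}` and `β'_n = ∏_{j=1}^k α_{n+t_{2j}}`
(here `t (2*j)` is the 0-based version of `t_{2j+1}`), one has
`|β_n − β'_n|² ≤ k² l Σ_{q<l} |α_{n+q+1} − α_{n+q}|²` and the corresponding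
estimate for `|β_n|² + |β'_n|² − 2 Re(β_n conj β'_n)`. -/
theorem stmt_6 (k l : ℕ) (hk : 0 < k) (hl : 0 < l) (t : ℕ → ℕ)
    (ht : ∀ i < 2 * k, t i ≤ l) (α : ℕ → ℂ) (hα : ∀ n, ‖α n‖ < 1)
    (n : ℕ) :
    ‖(∏ j ∈ Finset.range k, α (n + t (2 * j))) -
          ∏ j ∈ Finset.range k, α (n + t (2 * j + 1))‖ ^ 2 ≤
        (k : ℝ) ^ 2 * l * ∑ q ∈ Finset.range l, ‖α (n + q + 1) - α (n + q)‖ ^ 2 ∧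
      ‖∏ j ∈ Finset.range k, α (n + t (2 * j))‖ ^ 2 +
          ‖∏ j ∈ Finset.range k, α (n + t (2 * j + 1))‖ ^ 2 -
          2 * ((∏ j ∈ Finset.range k, α (n + t (2 * j))) *
            (starRingEnd ℂ) (∏ j ∈ Finset.range k, α (n + t (2 * j + 1)))).re ≤
        (k : ℝ) ^ 2 * l * ∑ q ∈ Finset.range l, ‖α (n + q + 1) - α (n + q)‖ ^ 2 :=
  stmt_6_general k l t ht α hα n
end

section
/- Let k, l be positive integers, let t = (t_1, ..., t_{2k}) be a tuple with each t_i ∈ {0, 1, ..., l}, and let α : ℕ → ℂ be a sequence with |α_n| < 1 for all n. For each n ∈ ℕ set β_n = ∏_{j=1}^{k} α_{n+t_{2j−1}}. Then | |β_n|^2 − (1/k) Σ_{j=1}^{k} |α_{n+t_{2j−1}}|^{2k} | ≤ 4 (k−1)^2 · l · Σ_{q=0}^{l−1} |α_{n+q+1} − α_{n+q}|^2. -/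
/-!
Write `z_j = |α_{n+t(2j)}|² ∈ [0, 1]`. AM-GM gives `∏ z_j ≤ (1/k) ∑ z_j^k`. For the reverse
bound expand around `m = min z_j`, `z_j = m + δ_j`: to second order
`(m + δ)^k ≤ m^k + k m^{k-1} δ + (k-1)² δ²` (using `m + δ ≤ 1`) and
`∏ (m + δ_j) ≥ m^k + m^{k-1} ∑ δ_j`, so the gap is at most `(k-1)² max (z_i - z_j)²`.
Finally `|z_i - z_j| ≤ 2 |α_{n+t_i} - α_{n+t_j}|`, which telescopes to
`2 ∑_{q<l} |α_{n+q+1} - α_{n+q}|`, and Cauchy-Schwarz bounds its square by `4 l ∑_{q<l} |⋯|²`.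
-/

open Finset

section OrderedRing

variable {R : Type*} [CommRing R] [LinearOrder R] [IsStrictOrderedRing R]

theorem pow_add_pow_mul_sum_le_prod_add {m : R} (hm : 0 ≤ m) {δ : ℕ → R} (k : ℕ)
    (hδ : ∀ j ∈ range (k + 1), 0 ≤ δ j) :
    m ^ (k + 1) + m ^ k * ∑ j ∈ range (k + 1), δ j ≤ ∏ j ∈ range (k + 1), (m + δ j) := by
  induction k with
  | zero => simp
  | succ k ih =>
    have hδk : 0 ≤ δ (k + 1) := hδ _ (self_mem_range_succ _)
    have hsum : 0 ≤ ∑ j ∈ range (k + 1), δ j :=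
      sum_nonneg fun j hj => hδ j (range_subset_range.2 (by omega) hj)
    have ih := ih fun j hj => hδ j (range_subset_range.2 (by omega) hj)
    rw [prod_range_succ, sum_range_succ]
    calc m ^ (k + 2) + m ^ (k + 1) * (∑ j ∈ range (k + 1), δ j + δ (k + 1))
        ≤ (m ^ (k + 1) + m ^ k * ∑ j ∈ range (k + 1), δ j) * (m + δ (k + 1)) := by
          have := mul_nonneg (mul_nonneg (pow_nonneg hm k) hsum) hδk
          linear_combination this
      _ ≤ _ := mul_le_mul_of_nonneg_right ih (add_nonneg hm hδk)

theorem add_pow_succ_le {m δ : R} (hm : 0 ≤ m) (hδ : 0 ≤ δ) (h1 : m + δ ≤ 1) (k : ℕ) :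
    (m + δ) ^ (k + 1) ≤ m ^ (k + 1) + (k + 1) * m ^ k * δ + k ^ 2 * δ ^ 2 := by
  induction k with
  | zero => simp
  | succ k ih =>
    have hmk : m ^ k ≤ 1 := pow_le_one₀ hm (by linarith)
    calc (m + δ) ^ (k + 2) = (m + δ) * (m + δ) ^ (k + 1) := by ring
      _ ≤ (m + δ) * (m ^ (k + 1) + (k + 1) * m ^ k * δ + k ^ 2 * δ ^ 2) :=
          mul_le_mul_of_nonneg_left ih (add_nonneg hm hδ)
      _ ≤ _ := by
          push_cast
          have hcube : (k : R) ^ 2 * δ ^ 2 * (m + δ) ≤ k ^ 2 * δ ^ 2 :=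
            mul_le_of_le_one_right (by positivity) h1
          have hcross : (k + 1 : R) * δ ^ 2 * m ^ k ≤ (k + 1) * δ ^ 2 :=
            mul_le_of_le_one_right (by positivity) hmk
          have hk : (0 : R) ≤ k * δ ^ 2 := by positivity
          linear_combination hcube + hcross + hk

end OrderedRing

theorem prod_le_mean_pow_card {ι : Type*} {s : Finset ι} (hs : s.Nonempty) {z : ι → ℝ}
    (hz : ∀ i ∈ s, 0 ≤ z i) : ∏ i ∈ s, z i ≤ (1 / (#s : ℝ)) * ∑ i ∈ s, z i ^ #s := by
  have hcard : (#s : ℝ) ≠ 0 := by exact_mod_cast hs.card_pos.ne'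
  calc ∏ i ∈ s, z i = ∏ i ∈ s, (z i ^ #s) ^ (1 / (#s : ℝ)) :=
        prod_congr rfl fun i hi => by
          rw [one_div, Real.pow_rpow_inv_natCast (hz i hi) (by simpa using hcard)]
    _ ≤ ∑ i ∈ s, (1 / (#s : ℝ)) * z i ^ #s :=
        Real.geom_mean_le_arith_mean_weighted s _ _ (fun _ _ => by positivity)
          (by simp [hcard]) fun i hi => pow_nonneg (hz i hi) _
    _ = _ := (mul_sum _ _ _).symm

theorem abs_mean_pow_sub_prod_le {k : ℕ} (hk : 0 < k) {z : ℕ → ℝ}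
    (hz : ∀ j ∈ range k, 0 ≤ z j ∧ z j ≤ 1) {B : ℝ}
    (hB : ∀ i ∈ range k, ∀ j ∈ range k, (z i - z j) ^ 2 ≤ B) :
    |(1 / (k : ℝ)) * ∑ j ∈ range k, z j ^ k - ∏ j ∈ range k, z j| ≤ ((k - 1 : ℕ) : ℝ) ^ 2 * B := by
  have hne : (range k).Nonempty := nonempty_range_iff.2 hk.ne'
  have hamgm := prod_le_mean_pow_card hne fun j hj => (hz j hj).1
  rw [card_range] at hamgm
  rw [abs_of_nonneg (sub_nonneg.2 hamgm)]
  obtain ⟨j₀, hj₀, hmin⟩ := exists_min_image (range k) z hne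
  obtain ⟨K, rfl⟩ := Nat.exists_eq_add_one_of_ne_zero hk.ne'
  set m := z j₀
  have hm : 0 ≤ m := (hz j₀ hj₀).1
  have hδ : ∀ j ∈ range (K + 1), 0 ≤ z j - m := fun j hj => sub_nonneg.2 (hmin j hj)
  have hpow : ∀ j ∈ range (K + 1), z j ^ (K + 1) ≤
      m ^ (K + 1) + (K + 1) * m ^ K * (z j - m) + K ^ 2 * (z j - m) ^ 2 := fun j hj => by
    simpa using add_pow_succ_le hm (hδ j hj) (by simpa using (hz j hj).2) K
  have hprod :
      m ^ (K + 1) + m ^ K * ∑ j ∈ range (K + 1), (z j - m) ≤ ∏ j ∈ range (K + 1), z j := by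
    simpa using pow_add_pow_mul_sum_le_prod_add hm K hδ
  have hsq : ∑ j ∈ range (K + 1), (z j - m) ^ 2 ≤ (K + 1) * B := by
    simpa using sum_le_sum fun j hj => hB j hj j₀ hj₀
  have hsum := sum_le_sum hpow
  simp only [sum_add_distrib, sum_const, card_range, nsmul_eq_mul, ← mul_sum] at hsum
  push_cast at hsum ⊢
  have hK : (0 : ℝ) < K + 1 := by positivity
  rw [div_mul_eq_mul_div, one_mul, sub_le_iff_le_add, div_le_iff₀ hK]
  nlinarith [mul_le_mul_of_nonneg_left hsq (sq_nonneg (K : ℝ))]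

theorem abs_sq_norm_sub_sq_norm_le {E : Type*} [SeminormedAddCommGroup E] {x y : E}
    (hx : ‖x‖ ≤ 1) (hy : ‖y‖ ≤ 1) : |‖x‖ ^ 2 - ‖y‖ ^ 2| ≤ 2 * ‖x - y‖ := by
  rw [sq_sub_sq, abs_mul, abs_of_nonneg (by positivity : 0 ≤ ‖x‖ + ‖y‖)]
  exact mul_le_mul (by linarith) (abs_norm_sub_norm_le x y) (abs_nonneg _) zero_le_two

theorem dist_le_range_sum_dist_of_le {α : Type*} [PseudoMetricSpace α] (f : ℕ → α) {l u v : ℕ}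
    (hu : u ≤ l) (hv : v ≤ l) : dist (f u) (f v) ≤ ∑ i ∈ range l, dist (f i) (f (i + 1)) := by
  wlog huv : u ≤ v generalizing u v
  · rw [dist_comm]; exact this hv hu (le_of_not_ge huv)
  calc dist (f u) (f v) ≤ ∑ i ∈ Ico u v, dist (f i) (f (i + 1)) := dist_le_Ico_sum_dist f huv
    _ ≤ ∑ i ∈ range l, dist (f i) (f (i + 1)) := by
        rw [range_eq_Ico]
        exact sum_le_sum_of_subset_of_nonneg (Ico_subset_Ico (Nat.zero_le u) hv)
          fun _ _ _ => dist_nonneg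

theorem sq_norm_sq_sub_norm_sq_le {E : Type*} [SeminormedAddCommGroup E] {f : ℕ → E}
    (hf : ∀ i, ‖f i‖ ≤ 1) {l u v : ℕ} (hu : u ≤ l) (hv : v ≤ l) :
    (‖f u‖ ^ 2 - ‖f v‖ ^ 2) ^ 2 ≤ 4 * l * ∑ i ∈ range l, ‖f (i + 1) - f i‖ ^ 2 := by
  set T := ∑ i ∈ range l, ‖f (i + 1) - f i‖
  have hdist : ‖f u - f v‖ ≤ T := by
    rw [norm_sub_rev]
    simpa only [dist_eq_norm'] using dist_le_range_sum_dist_of_le f hu hv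
  have hCS : T ^ 2 ≤ l * ∑ i ∈ range l, ‖f (i + 1) - f i‖ ^ 2 := by
    simpa only [card_range] using
      sq_sum_le_card_mul_sum_sq (s := range l) (f := fun i => ‖f (i + 1) - f i‖)
  calc (‖f u‖ ^ 2 - ‖f v‖ ^ 2) ^ 2 = |‖f u‖ ^ 2 - ‖f v‖ ^ 2| ^ 2 := (sq_abs _).symm
    _ ≤ (2 * T) ^ 2 := pow_le_pow_left₀ (abs_nonneg _)
        ((abs_sq_norm_sub_sq_norm_le (hf u) (hf v)).trans (by linarith)) 2
    _ ≤ _ := by linarith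

-- `t i` is the paper's `t_{i+1}`, so `t (2 * j)` for `j < k` runs over `t_1, t_3, …, t_{2k-1}`.
theorem stmt_7_general (k l : ℕ) (hk : 0 < k) (t : ℕ → ℕ)
    (ht : ∀ i < 2 * k, t i ≤ l) (α : ℕ → ℂ) (hα : ∀ n, ‖α n‖ < 1)
    (n : ℕ) :
    |‖∏ j ∈ Finset.range k, α (n + t (2 * j))‖ ^ 2 -
        (1 / (k : ℝ)) * ∑ j ∈ Finset.range k, ‖α (n + t (2 * j))‖ ^ (2 * k)| ≤
      4 * ((k - 1 : ℕ) : ℝ) ^ 2 * l *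
        ∑ q ∈ Finset.range l, ‖α (n + q + 1) - α (n + q)‖ ^ 2 := by
  set z : ℕ → ℝ := fun j => ‖α (n + t (2 * j))‖ ^ 2
  have hz : ∀ j ∈ range k, 0 ≤ z j ∧ z j ≤ 1 := fun j _ =>
    ⟨by positivity, pow_le_one₀ (norm_nonneg _) (hα _).le⟩
  have ht' : ∀ j ∈ range k, t (2 * j) ≤ l := fun j hj => ht _ (by rw [mem_range] at hj; omega)
  have hB : ∀ i ∈ range k, ∀ j ∈ range k, (z i - z j) ^ 2 ≤
      4 * l * ∑ q ∈ range l, ‖α (n + q + 1) - α (n + q)‖ ^ 2 := fun i hi j hj =>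
    sq_norm_sq_sub_norm_sq_le (f := fun q => α (n + q)) (fun _ => (hα _).le)
      (ht' i hi) (ht' j hj)
  rw [norm_prod, ← prod_pow, abs_sub_comm]
  simp only [pow_mul]
  calc _ ≤ ((k - 1 : ℕ) : ℝ) ^ 2 * (4 * l * ∑ q ∈ range l, ‖α (n + q + 1) - α (n + q)‖ ^ 2) :=
        abs_mean_pow_sub_prod_le hk hz hB
    _ = _ := by ring

/-- With `β_n = ∏_{j=1}^k α_{n+t_{2j−1}}` (here `t (2*j)` is the 0-based version of
`t_{2j+1}`), one has
`| |β_n|² − (1/k) Σ_{j=1}^k |α_{n+t_{2j−1}}|^{2k} | ≤ 4(k−1)² l Σ_{q<l} |α_{n+q+1} − α_{n+q}|²`. -/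
theorem stmt_7 (k l : ℕ) (hk : 0 < k) (hl : 0 < l) (t : ℕ → ℕ)
    (ht : ∀ i < 2 * k, t i ≤ l) (α : ℕ → ℂ) (hα : ∀ n, ‖α n‖ < 1)
    (n : ℕ) :
    |‖∏ j ∈ Finset.range k, α (n + t (2 * j))‖ ^ 2 -
        (1 / (k : ℝ)) * ∑ j ∈ Finset.range k, ‖α (n + t (2 * j))‖ ^ (2 * k)| ≤
      4 * ((k - 1 : ℕ) : ℝ) ^ 2 * l *
        ∑ q ∈ Finset.range l, ‖α (n + q + 1) - α (n + q)‖ ^ 2 :=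
  stmt_7_general k l hk t ht α hα n
end

section
/- Let k, l be positive integers and let t = (t_1, ..., t_{2k}) be a tuple with each t_i ∈ {0, 1, ..., l}. There exists a constant C, depending only on k and l, such that for every sequence α : ℕ → ℂ with |α_n| < 1 for all n and Σ_{n=0}^{∞} |α_{n+1} − α_n|^2 < ∞, one has Σ_{n=0}^{∞} | Re( ∏_{j=1}^{k} α_{n+t_{2j−1}} · conj(α_{n+t_{2j}}) ) − (1/(2k)) Σ_{i=1}^{2k} |α_{n+t_i}|^{2k} | ≤ C · Σ_{n=0}^{∞} |α_{n+1} − α_n|^2. -/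
/-!
Fix `n`, put `b = α n` and `a i = α (n + t i)`. The summand is a real polynomial in the `a i`
that vanishes to second order on the diagonal `a i = b`: expanding the product
`∏ a (2j) * conj (a (2j+1))` and the powers `(|a i|²)^k` to first order around `r = |b|²`, the
linear terms combine into `-(r^(k-1)/2) ∑ |a (2j) - a (2j+1)|²`, so the summand is
`O(∑ |a i - b|²)`. Since `t i ≤ l`, each `|a i - b|²` is at most `l` times the sum of the next
`l` squared increments of `α`, and summing over `n` counts every increment at most `l` times.
-/

open Finset ComplexConjugate

theorem Finset.sum_range_two_mul {M : Type*} [AddCommMonoid M] (f : ℕ → M) (k : ℕ) :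
    ∑ i ∈ range (2 * k), f i = ∑ j ∈ range k, (f (2 * j) + f (2 * j + 1)) := by
  induction k with
  | zero => simp
  | succ k ih =>
    rw [show 2 * (k + 1) = 2 * k + 1 + 1 by ring, sum_range_succ, sum_range_succ, ih,
      sum_range_succ, add_assoc]

theorem norm_prod_sub_pow_sub_le {R : Type*} [NormedCommRing R] [NormOneClass R] {c : R}
    {z : ℕ → R} (hc : ‖c‖ ≤ 1) (hz : ∀ j, ‖z j‖ ≤ 1) (m : ℕ) :
    ‖∏ j ∈ range (m + 1), z j - c ^ (m + 1) - c ^ m * ∑ j ∈ range (m + 1), (z j - c)‖ ≤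
      (m + 1) * ∑ j ∈ range (m + 1), ‖z j - c‖ ^ 2 := by
  induction m with
  | zero => simp
  | succ m ih =>
    set E := ∏ j ∈ range (m + 1), z j - c ^ (m + 1) - c ^ m * ∑ j ∈ range (m + 1), (z j - c)
    set S := ∑ j ∈ range (m + 1), (z j - c)
    set d := z (m + 1) - c
    have hstep : ∏ j ∈ range (m + 1 + 1), z j - c ^ (m + 1 + 1) -
        c ^ (m + 1) * ∑ j ∈ range (m + 1 + 1), (z j - c) = E * z (m + 1) + c ^ m * S * d := by
      rw [prod_range_succ, sum_range_succ]
      ring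
    have hcross :
        ‖S‖ * ‖d‖ ≤ (∑ j ∈ range (m + 1), ‖z j - c‖ ^ 2 + (m + 1) * ‖d‖ ^ 2) / 2 := by
      calc ‖S‖ * ‖d‖ ≤ ∑ j ∈ range (m + 1), ‖z j - c‖ * ‖d‖ := by
            rw [← sum_mul]; gcongr; exact norm_sum_le _ _
        _ ≤ ∑ j ∈ range (m + 1), (‖z j - c‖ ^ 2 + ‖d‖ ^ 2) / 2 := by
            gcongr with j; nlinarith [sq_nonneg (‖z j - c‖ - ‖d‖)]
        _ = _ := by
            rw [← sum_div, sum_add_distrib, sum_const, card_range, nsmul_eq_mul]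
            push_cast
            ring
    have hcm : ‖c ^ m‖ ≤ 1 := (norm_pow_le _ _).trans (pow_le_one₀ (norm_nonneg _) hc)
    rw [hstep]
    calc ‖E * z (m + 1) + c ^ m * S * d‖ ≤ ‖E‖ * ‖z (m + 1)‖ + ‖c ^ m‖ * ‖S‖ * ‖d‖ :=
          norm_add_le_of_le (norm_mul_le _ _) norm_mul₃_le
      _ ≤ ‖E‖ + ‖S‖ * ‖d‖ := by
          gcongr
          · exact mul_le_of_le_one_right (norm_nonneg _) (hz _)
          · exact mul_le_of_le_one_left (norm_nonneg _) hcm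
      _ ≤ (↑(m + 1) + 1) * ∑ j ∈ range (m + 1 + 1), ‖z j - c‖ ^ 2 := by
          rw [sum_range_succ]
          have hS0 : 0 ≤ ∑ j ∈ range (m + 1), ‖z j - c‖ ^ 2 := by positivity
          push_cast at ih ⊢
          nlinarith [sq_nonneg ‖d‖]

theorem abs_pow_sub_pow_sub_le {p r : ℝ} (hp : |p| ≤ 1) (hr : |r| ≤ 1) (m : ℕ) :
    |p ^ (m + 1) - r ^ (m + 1) - (m + 1) * r ^ m * (p - r)| ≤ (m + 1) ^ 2 * (p - r) ^ 2 := by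
  have h := norm_prod_sub_pow_sub_le (c := r) (z := fun _ => p) hr (fun _ => hp) m
  simp only [prod_const, sum_const, card_range, nsmul_eq_mul, Real.norm_eq_abs, sq_abs] at h
  push_cast at h
  calc |p ^ (m + 1) - r ^ (m + 1) - (m + 1) * r ^ m * (p - r)|
      = |p ^ (m + 1) - r ^ (m + 1) - r ^ m * ((m + 1) * (p - r))| := by ring_nf
    _ ≤ _ := h
    _ = _ := by ring

theorem abs_sq_norm_sub_sq_norm_le_s8 {E : Type*} [SeminormedAddCommGroup E] {a b : E}
    (ha : ‖a‖ ≤ 1) (hb : ‖b‖ ≤ 1) : |‖a‖ ^ 2 - ‖b‖ ^ 2| ≤ 2 * ‖a - b‖ := by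
  rw [sq_sub_sq, abs_mul, abs_of_nonneg (by positivity : 0 ≤ ‖a‖ + ‖b‖)]
  gcongr
  · linarith
  · exact abs_norm_sub_norm_le a b

theorem abs_norm_pow_sub_le {E : Type*} [SeminormedAddCommGroup E] {a b : E}
    (ha : ‖a‖ ≤ 1) (hb : ‖b‖ ≤ 1) (m : ℕ) :
    |(‖a‖ ^ 2) ^ (m + 1) - (‖b‖ ^ 2) ^ (m + 1) -
        (m + 1) * (‖b‖ ^ 2) ^ m * (‖a‖ ^ 2 - ‖b‖ ^ 2)| ≤ 4 * (m + 1) ^ 2 * ‖a - b‖ ^ 2 := by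
  have hsq : ∀ x : E, ‖x‖ ≤ 1 → |‖x‖ ^ 2| ≤ 1 := fun x hx => by
    rw [abs_sq]; exact pow_le_one₀ (norm_nonneg _) hx
  calc _ ≤ (m + 1) ^ 2 * (‖a‖ ^ 2 - ‖b‖ ^ 2) ^ 2 :=
        abs_pow_sub_pow_sub_le (hsq a ha) (hsq b hb) m
    _ ≤ (m + 1) ^ 2 * (2 * ‖a - b‖) ^ 2 := by
        have h := abs_le.1 (abs_sq_norm_sub_sq_norm_le_s8 ha hb)
        exact mul_le_mul_of_nonneg_left (sq_le_sq' h.1 h.2) (by positivity)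
    _ = _ := by ring

theorem norm_mul_conj_sub_mul_conj_le {a a' b : ℂ} (ha' : ‖a'‖ ≤ 1) (hb : ‖b‖ ≤ 1) :
    ‖a * conj a' - b * conj b‖ ≤ ‖a - b‖ + ‖a' - b‖ := by
  have h : a * conj a' - b * conj b = (a - b) * conj a' + b * conj (a' - b) := by
    rw [map_sub]; ring
  rw [h]
  refine norm_add_le_of_le ?_ ?_ <;> rw [norm_mul, Complex.norm_conj]
  · exact mul_le_of_le_one_right (norm_nonneg _) ha'
  · exact mul_le_of_le_one_left (norm_nonneg _) hb

theorem re_mul_conj_sub_half_sq_norm (a a' : ℂ) (r : ℝ) :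
    (a * conj a').re - r - ((‖a‖ ^ 2 - r) + (‖a'‖ ^ 2 - r)) / 2 = -(‖a - a'‖ ^ 2 / 2) := by
  rw [Complex.sq_norm, Complex.sq_norm, Complex.sq_norm, Complex.normSq_sub]
  ring

section PairedProduct

variable {a : ℕ → ℂ} {b : ℂ}

theorem sum_sq_norm_le_of_le_pair {g : ℕ → ℂ}
    (hg : ∀ j, ‖g j‖ ≤ ‖a (2 * j) - b‖ + ‖a (2 * j + 1) - b‖) (k : ℕ) :
    ∑ j ∈ range k, ‖g j‖ ^ 2 ≤ 2 * ∑ i ∈ range (2 * k), ‖a i - b‖ ^ 2 := by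
  rw [sum_range_two_mul, mul_sum]
  gcongr with j
  exact (pow_le_pow_left₀ (norm_nonneg _) (hg j) 2).trans add_sq_le

theorem abs_re_prod_mul_conj_sub_le (ha : ∀ i, ‖a i‖ ≤ 1) (hb : ‖b‖ ≤ 1) (m : ℕ) :
    |(∏ j ∈ range (m + 1), a (2 * j) * conj (a (2 * j + 1))).re - (‖b‖ ^ 2) ^ (m + 1) -
        (‖b‖ ^ 2) ^ m *
          ∑ j ∈ range (m + 1), ((a (2 * j) * conj (a (2 * j + 1))).re - ‖b‖ ^ 2)| ≤
      2 * (m + 1) * ∑ i ∈ range (2 * (m + 1)), ‖a i - b‖ ^ 2 := by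
  set z : ℕ → ℂ := fun j => a (2 * j) * conj (a (2 * j + 1))
  have hbb : ((‖b‖ ^ 2 : ℝ) : ℂ) = b * conj b := by
    rw [Complex.mul_conj, Complex.normSq_eq_norm_sq]
  have hz : ∀ j, ‖z j‖ ≤ 1 := fun j => by
    simp only [z, norm_mul, Complex.norm_conj]
    exact mul_le_one₀ (ha _) (norm_nonneg _) (ha _)
  have hc : ‖((‖b‖ ^ 2 : ℝ) : ℂ)‖ ≤ 1 := by
    rw [Complex.norm_real, Real.norm_eq_abs, abs_sq]; exact pow_le_one₀ (norm_nonneg _) hb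
  have hlin := norm_prod_sub_pow_sub_le hc hz m
  have hre : (∏ j ∈ range (m + 1), z j).re - (‖b‖ ^ 2) ^ (m + 1) -
        (‖b‖ ^ 2) ^ m * ∑ j ∈ range (m + 1), ((z j).re - ‖b‖ ^ 2) =
      (∏ j ∈ range (m + 1), z j - ((‖b‖ ^ 2 : ℝ) : ℂ) ^ (m + 1) -
        ((‖b‖ ^ 2 : ℝ) : ℂ) ^ m * ∑ j ∈ range (m + 1), (z j - ((‖b‖ ^ 2 : ℝ) : ℂ))).re := by
    simp only [Complex.sub_re, ← Complex.ofReal_pow, Complex.re_ofReal_mul, Complex.re_sum,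
      Complex.ofReal_re]
  rw [hre]
  calc _ ≤ _ := Complex.abs_re_le_norm _
    _ ≤ _ := hlin
    _ ≤ (m + 1) * (2 * ∑ i ∈ range (2 * (m + 1)), ‖a i - b‖ ^ 2) := by
        gcongr
        refine sum_sq_norm_le_of_le_pair (fun j => ?_) _
        rw [hbb]
        exact norm_mul_conj_sub_mul_conj_le (ha _) hb
    _ = _ := by ring

theorem abs_re_prod_mul_conj_sub_mean_pow_le (ha : ∀ i, ‖a i‖ ≤ 1) (hb : ‖b‖ ≤ 1) {k : ℕ}
    (hk : 0 < k) :
    |(∏ j ∈ range k, a (2 * j) * conj (a (2 * j + 1))).re -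
        1 / (2 * (k : ℝ)) * ∑ i ∈ range (2 * k), ‖a i‖ ^ (2 * k)| ≤
      (4 * k + 1) * ∑ i ∈ range (2 * k), ‖a i - b‖ ^ 2 := by
  obtain ⟨m, rfl⟩ := Nat.exists_eq_add_one_of_ne_zero hk.ne'
  set r := ‖b‖ ^ 2
  set D := ∑ i ∈ range (2 * (m + 1)), ‖a i - b‖ ^ 2
  set A := (∏ j ∈ range (m + 1), a (2 * j) * conj (a (2 * j + 1))).re - r ^ (m + 1) -
    r ^ m * ∑ j ∈ range (m + 1), ((a (2 * j) * conj (a (2 * j + 1))).re - r) with hA_def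
  set B := ∑ i ∈ range (2 * (m + 1)),
    ((‖a i‖ ^ 2) ^ (m + 1) - r ^ (m + 1) - (m + 1) * r ^ m * (‖a i‖ ^ 2 - r)) with hB_def
  set G := ∑ j ∈ range (m + 1), ‖a (2 * j) - a (2 * j + 1)‖ ^ 2 with hG_def
  have hA : |A| ≤ 2 * (m + 1) * D := abs_re_prod_mul_conj_sub_le ha hb m
  have hB : |B| ≤ 4 * (m + 1) ^ 2 * D := by
    refine (abs_sum_le_sum_abs _ _).trans ?_
    rw [mul_sum]
    exact sum_le_sum fun i _ => abs_norm_pow_sub_le (ha i) hb m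
  have hG : G ≤ 2 * D := sum_sq_norm_le_of_le_pair (fun j => by
    simpa only [norm_sub_rev b] using norm_sub_le_norm_sub_add_norm_sub (a (2 * j)) b _) _
  -- the first-order terms of the two expansions cancel up to `- r ^ m * G / 2`
  have hsplit : (∏ j ∈ range (m + 1), a (2 * j) * conj (a (2 * j + 1))).re -
      1 / (2 * ((m + 1 : ℕ) : ℝ)) * ∑ i ∈ range (2 * (m + 1)), ‖a i‖ ^ (2 * (m + 1)) =
      A - B / (2 * (m + 1)) - r ^ m * G / 2 := by
    have hfirst : ∑ j ∈ range (m + 1), ((a (2 * j) * conj (a (2 * j + 1))).re - r) -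
        (∑ i ∈ range (2 * (m + 1)), (‖a i‖ ^ 2 - r)) / 2 = -(G / 2) := by
      rw [sum_range_two_mul, sum_div, ← sum_sub_distrib, hG_def, sum_div, ← sum_neg_distrib]
      exact sum_congr rfl fun j _ => re_mul_conj_sub_half_sq_norm _ _ r
    simp only [hA_def, hB_def, pow_mul, sum_sub_distrib, sum_const, card_range, nsmul_eq_mul,
      ← mul_sum] at hfirst ⊢
    push_cast at hfirst ⊢
    field_simp
    linear_combination (2 * (m + 1) * r ^ m) * hfirst
  have hB' : |B / (2 * (m + 1))| ≤ 2 * (m + 1) * D := by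
    rw [abs_div, abs_of_pos (by positivity : (0 : ℝ) < 2 * (m + 1)),
      div_le_iff₀ (by positivity)]
    linarith
  have hrG : |r ^ m * G / 2| ≤ D := by
    have hr : r ^ m ≤ 1 := pow_le_one₀ (by positivity) (pow_le_one₀ (norm_nonneg _) hb)
    rw [abs_of_nonneg (by positivity)]
    nlinarith [mul_le_of_le_one_left (by positivity : 0 ≤ G) hr]
  rw [hsplit]
  calc _ ≤ |A| + |B / (2 * (m + 1))| + |r ^ m * G / 2| :=
        (abs_sub _ _).trans (by gcongr; exact abs_sub _ _)
    _ ≤ 2 * (m + 1) * D + 2 * (m + 1) * D + D := by gcongr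
    _ = _ := by push_cast; ring

end PairedProduct

theorem norm_sub_sq_le_mul_sum_sq {E : Type*} [SeminormedAddCommGroup E] (α : ℕ → E)
    {τ l : ℕ} (hτ : τ ≤ l) (n : ℕ) :
    ‖α (n + τ) - α n‖ ^ 2 ≤ l * ∑ m ∈ range l, ‖α (n + m + 1) - α (n + m)‖ ^ 2 := by
  have htel : ‖α (n + τ) - α n‖ ≤ ∑ m ∈ range l, ‖α (n + m + 1) - α (n + m)‖ := by
    have hsum := sum_range_sub (fun m => α (n + m)) τ
    simp only [add_zero, ← add_assoc] at hsum
    rw [← hsum]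
    exact (norm_sum_le _ _).trans <|
      sum_le_sum_of_subset_of_nonneg (range_subset_range.2 hτ) fun _ _ _ => norm_nonneg _
  calc _ ≤ (∑ m ∈ range l, ‖α (n + m + 1) - α (n + m)‖) ^ 2 :=
        pow_le_pow_left₀ (norm_nonneg _) htel 2
    _ ≤ _ := by
        simpa only [card_range] using sq_sum_le_card_mul_sum_sq (s := range l)
          (f := fun m => ‖α (n + m + 1) - α (n + m)‖)

theorem summable_sum_range_add {g : ℕ → ℝ} (hg : Summable g) (l : ℕ) :
    Summable fun n => ∑ m ∈ range l, g (n + m) :=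
  summable_sum fun m _ => (summable_nat_add_iff m).2 hg

theorem tsum_sum_range_add_le {g : ℕ → ℝ} (hg : Summable g) (hg0 : ∀ n, 0 ≤ g n) (l : ℕ) :
    ∑' n, ∑ m ∈ range l, g (n + m) ≤ l * ∑' n, g n := by
  rw [Summable.tsum_finsetSum fun m _ => (summable_nat_add_iff m).2 hg]
  calc _ ≤ ∑ _m ∈ range l, ∑' n, g n :=
        sum_le_sum fun m _ => tsum_comp_le_tsum_of_inj hg hg0 (add_left_injective m)
    _ = _ := by rw [sum_const, card_range, nsmul_eq_mul]

theorem stmt_8_general (k l : ℕ) (hk : 0 < k) (t : ℕ → ℕ)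
    (ht : ∀ i < 2 * k, t i ≤ l) :
    ∃ C : ℝ, ∀ α : ℕ → ℂ, (∀ n, ‖α n‖ < 1) →
      Summable (fun n => ‖α (n + 1) - α n‖ ^ 2) →
      Summable (fun n =>
          |((∏ j ∈ Finset.range k,
                α (n + t (2 * j)) * (starRingEnd ℂ) (α (n + t (2 * j + 1)))).re -
            (1 / (2 * (k : ℝ))) *
              ∑ i ∈ Finset.range (2 * k), ‖α (n + t i)‖ ^ (2 * k))|) ∧
        (∑' n : ℕ,
          |((∏ j ∈ Finset.range k,
                α (n + t (2 * j)) * (starRingEnd ℂ) (α (n + t (2 * j + 1)))).re -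
            (1 / (2 * (k : ℝ))) *
              ∑ i ∈ Finset.range (2 * k), ‖α (n + t i)‖ ^ (2 * k))|) ≤
          C * ∑' n : ℕ, ‖α (n + 1) - α n‖ ^ 2 := by
  set K : ℝ := (4 * k + 1) * (2 * k * l)
  refine ⟨K * l, fun α hα hsum => ?_⟩
  set W : ℕ → ℝ := fun n => ∑ m ∈ range l, ‖α (n + m + 1) - α (n + m)‖ ^ 2
  have hwindow : ∀ n, (4 * k + 1) * ∑ i ∈ range (2 * k), ‖α (n + t i) - α n‖ ^ 2 ≤ K * W n :=
    fun n => calc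
      _ ≤ (4 * k + 1) * ∑ _i ∈ range (2 * k), l * W n := by
          gcongr with i hi
          exact norm_sub_sq_le_mul_sum_sq α (ht i (mem_range.1 hi)) n
      _ = K * W n := by rw [sum_const, card_range, nsmul_eq_mul]; push_cast; ring
  have hpoint := fun n => (abs_re_prod_mul_conj_sub_mean_pow_le (a := fun i => α (n + t i))
    (fun i => (hα _).le) (hα n).le hk).trans (hwindow n)
  have hKW : Summable fun n => K * W n := (summable_sum_range_add hsum l).mul_left K
  have hF := hKW.of_nonneg_of_le (fun n => abs_nonneg _) hpoint
  refine ⟨hF, ?_⟩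
  calc _ ≤ ∑' n, K * W n := Summable.tsum_le_tsum hpoint hF hKW
    _ ≤ K * (l * ∑' n, ‖α (n + 1) - α n‖ ^ 2) := by
        rw [tsum_mul_left]
        gcongr
        exact tsum_sum_range_add_le hsum (fun n => sq_nonneg _) l
    _ = _ := by ring

/-- There is a constant `C = C(k, l)` such that for every sequence `α` in the unit disk
with square-summable forward differences,
`Σ_n | Re(∏_{j=1}^k α_{n+t_{2j−1}} conj(α_{n+t_{2j}})) − (1/(2k)) Σ_{i=1}^{2k} |α_{n+t_i}|^{2k} |
  ≤ C Σ_n |α_{n+1} − α_n|²`.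
(Here `t (2*j)`, `t (2*j+1)` are the 0-based versions of `t_{2j+1}`, `t_{2j+2}`.) -/
theorem stmt_8 (k l : ℕ) (hk : 0 < k) (hl : 0 < l) (t : ℕ → ℕ)
    (ht : ∀ i < 2 * k, t i ≤ l) :
    ∃ C : ℝ, ∀ α : ℕ → ℂ, (∀ n, ‖α n‖ < 1) →
      Summable (fun n => ‖α (n + 1) - α n‖ ^ 2) →
      Summable (fun n =>
          |((∏ j ∈ Finset.range k,
                α (n + t (2 * j)) * (starRingEnd ℂ) (α (n + t (2 * j + 1)))).re -
            (1 / (2 * (k : ℝ))) *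
              ∑ i ∈ Finset.range (2 * k), ‖α (n + t i)‖ ^ (2 * k))|) ∧
        (∑' n : ℕ,
          |((∏ j ∈ Finset.range k,
                α (n + t (2 * j)) * (starRingEnd ℂ) (α (n + t (2 * j + 1)))).re -
            (1 / (2 * (k : ℝ))) *
              ∑ i ∈ Finset.range (2 * k), ‖α (n + t i)‖ ^ (2 * k))|) ≤
          C * ∑' n : ℕ, ‖α (n + 1) - α n‖ ^ 2 :=
  stmt_8_general k l hk t ht
end

section
/- Let k be an integer, η, φ real numbers with e^{−i(kη−φ)} ≠ 1, f a complex number, and g = f / (e^{−i(kη−φ)} − 1). Let Γ : ℕ → ℂ satisfy Γ_n → 0 and Σ_{n=0}^{∞} |e^{iφ} Γ_{n+1} − Γ_n| < ∞, and let θ : ℕ → ℝ be an arbitrary real sequence. Then the series S = Σ_{n=0}^{∞} ( f · Γ_n · e^{ik[(n+1)η + 2θ_n]} − g · Γ_n · e^{ik[(n+1)η + 2θ_n]} · ( e^{2ik(θ_{n+1} − θ_n)} − 1 ) ) is convergent, and |S| ≤ 2 |g| · Σ_{n=0}^{∞} |e^{iφ} Γ_{n+1} − Γ_n|. -/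
open Filter Complex

/-! With `w = e^{iφ}`, `u = e^{-ikη}` and the unimodular phases `B n = e^{ik[(n+1)η + 2θ_n]}`,
the identity `f = g (u w - 1)` turns the `n`-th summand into `g u (w B_n - B_{n+1}) Γ_n`.
Summation by parts rewrites the partial sums of `Σ (w B_n - B_{n+1}) Γ_n` as
`Σ B_{n+1} (w Γ_{n+1} - Γ_n)` plus boundary terms, of which only `w B_0 Γ_0` survives since
`Γ_n → 0`. The first part is bounded by `T = Σ ‖w Γ_{n+1} - Γ_n‖`, and so is `‖Γ_0‖`, by
telescoping `w^n Γ_n`. -/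

section SummationByParts

open Finset Topology

variable {𝕜 E : Type*} [NormedField 𝕜] [NormedAddCommGroup E] [NormedSpace 𝕜 E]

theorem norm_smul_le_of_norm_le_one {c : 𝕜} (hc : ‖c‖ ≤ 1) (x : E) : ‖c • x‖ ≤ ‖x‖ := by
  rw [norm_smul]
  exact mul_le_of_le_one_left (norm_nonneg x) hc

theorem tendsto_smul_of_norm_le_one {c : ℕ → 𝕜} (hc : ∀ n, ‖c n‖ ≤ 1) {Γ : ℕ → E}
    (hΓ : Tendsto Γ atTop (𝓝 0)) : Tendsto (fun n => c n • Γ n) atTop (𝓝 0) :=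
  squeeze_zero_norm (fun n => norm_smul_le_of_norm_le_one (hc n) (Γ n))
    (tendsto_zero_iff_norm_tendsto_zero.mp hΓ)

theorem norm_le_tsum_norm_smul_succ_sub {w : 𝕜} (hw : ‖w‖ ≤ 1) {Γ : ℕ → E}
    (hΓ : Tendsto Γ atTop (𝓝 0)) (hs : Summable fun n => ‖w • Γ (n + 1) - Γ n‖) :
    ‖Γ 0‖ ≤ ∑' n, ‖w • Γ (n + 1) - Γ n‖ := by
  have hpow : ∀ n, ‖w ^ n‖ ≤ 1 := fun n => by simpa using pow_le_one₀ (norm_nonneg w) hw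
  have hlim : Tendsto (fun N => dist (Γ 0) (w ^ N • Γ N)) atTop (𝓝 ‖Γ 0‖) := by
    simpa using tendsto_const_nhds.dist (tendsto_smul_of_norm_le_one hpow hΓ)
  refine le_of_tendsto' hlim fun N => ?_
  calc dist (Γ 0) (w ^ N • Γ N)
      ≤ ∑ n ∈ range N, dist (w ^ n • Γ n) (w ^ (n + 1) • Γ (n + 1)) := by
        simpa using dist_le_range_sum_dist (fun n => w ^ n • Γ n) N
    _ ≤ ∑ n ∈ range N, ‖w • Γ (n + 1) - Γ n‖ := by
        refine sum_le_sum fun n _ => ?_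
        rw [dist_comm, dist_eq_norm, pow_succ', mul_comm, mul_smul, ← smul_sub]
        exact norm_smul_le_of_norm_le_one (hpow n) _
    _ ≤ ∑' n, ‖w • Γ (n + 1) - Γ n‖ := hs.sum_le_tsum _ fun n _ => norm_nonneg _

theorem sum_range_sub_succ_smul_by_parts (w : 𝕜) (B : ℕ → 𝕜) (Γ : ℕ → E) (N : ℕ) :
    ∑ n ∈ range N, (w * B n - B (n + 1)) • Γ n =
      ∑ n ∈ range N, B (n + 1) • (w • Γ (n + 1) - Γ n) -
        w • (B N • Γ N - B 0 • Γ 0) := by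
  rw [← sum_range_sub (fun n => B n • Γ n), smul_sum, ← sum_sub_distrib]
  refine sum_congr rfl fun n _ => ?_
  simp only [sub_smul, smul_sub, mul_smul, smul_comm w (B (n + 1))]
  abel

variable [CompleteSpace E]

theorem exists_tendsto_sum_range_sub_succ_smul {w : 𝕜} (hw : ‖w‖ ≤ 1) {B : ℕ → 𝕜}
    (hB : ∀ n, ‖B n‖ ≤ 1) {Γ : ℕ → E} (hΓ : Tendsto Γ atTop (𝓝 0))
    (hs : Summable fun n => ‖w • Γ (n + 1) - Γ n‖) :
    ∃ S, Tendsto (fun N => ∑ n ∈ range N, (w * B n - B (n + 1)) • Γ n) atTop (𝓝 S) ∧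
      ‖S‖ ≤ 2 * ∑' n, ‖w • Γ (n + 1) - Γ n‖ := by
  have hle : ∀ n, ‖B (n + 1) • (w • Γ (n + 1) - Γ n)‖ ≤ ‖w • Γ (n + 1) - Γ n‖ := fun n =>
    norm_smul_le_of_norm_le_one (hB (n + 1)) _
  have hsum : Summable fun n => B (n + 1) • (w • Γ (n + 1) - Γ n) :=
    .of_norm_bounded hs hle
  refine ⟨∑' n, B (n + 1) • (w • Γ (n + 1) - Γ n) + w • B 0 • Γ 0, ?_, ?_⟩
  · simp only [sum_range_sub_succ_smul_by_parts]
    have hboundary := ((tendsto_smul_of_norm_le_one hB hΓ).sub_const (B 0 • Γ 0)).const_smul w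
    simpa using hsum.hasSum.tendsto_sum_nat.sub hboundary
  · calc _ ≤ ‖∑' n, B (n + 1) • (w • Γ (n + 1) - Γ n)‖ + ‖Γ 0‖ :=
          (norm_add_le _ _).trans <| add_le_add le_rfl <|
            (norm_smul_le_of_norm_le_one hw _).trans (norm_smul_le_of_norm_le_one (hB 0) _)
      _ ≤ ∑' n, ‖w • Γ (n + 1) - Γ n‖ + ∑' n, ‖w • Γ (n + 1) - Γ n‖ :=
          add_le_add (tsum_of_norm_bounded hs.hasSum hle)
            (norm_le_tsum_norm_smul_succ_sub hw hΓ hs)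
      _ = _ := (two_mul _).symm

end SummationByParts

noncomputable def phase (k : ℤ) (η : ℝ) (θ : ℕ → ℝ) (n : ℕ) : ℂ :=
  exp (I * k * ((n + 1) * η + 2 * θ n))

theorem norm_phase (k : ℤ) (η : ℝ) (θ : ℕ → ℝ) (n : ℕ) : ‖phase k η θ n‖ = 1 := by
  simp [phase, norm_exp]

theorem summand_eq_sub_phase_mul (k : ℤ) (η φ : ℝ) {f g : ℂ}
    (hfg : f = g * (exp (-I * (k * η - φ)) - 1)) (Γ : ℕ → ℂ) (θ : ℕ → ℝ) (n : ℕ) :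
    f * Γ n * phase k η θ n -
        g * Γ n * phase k η θ n * (exp (2 * I * k * (θ (n + 1) - θ n)) - 1) =
      g * exp (-(I * k * η)) *
        ((exp (I * φ) * phase k η θ n - phase k η θ (n + 1)) * Γ n) := by
  have hE : exp (-I * (k * η - φ)) = exp (-(I * k * η)) * exp (I * φ) := by
    rw [← exp_add]; ring_nf
  have hshift : phase k η θ n * exp (2 * I * k * (θ (n + 1) - θ n)) =
      exp (-(I * k * η)) * phase k η θ (n + 1) := by
    simp only [phase, ← exp_add]; push_cast; ring_nf
  rw [hfg, hE]
  linear_combination -g * Γ n * hshift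

/-- Lemma 3.1: if `e^{−i(kη−φ)} ≠ 1`, `g = f/(e^{−i(kη−φ)} − 1)`, `Γ_n → 0` and
`Σ |e^{iφ}Γ_{n+1} − Γ_n| < ∞`, then the series
`S = Σ_n ( f Γ_n e^{ik[(n+1)η+2θ_n]} − g Γ_n e^{ik[(n+1)η+2θ_n]} (e^{2ik(θ_{n+1}−θ_n)} − 1) )`
converges and `|S| ≤ 2|g| Σ_n |e^{iφ}Γ_{n+1} − Γ_n|`. -/
theorem stmt_11 (k : ℤ) (η φ : ℝ)
    (hkφ : Complex.exp (-Complex.I * ((k : ℂ) * (η : ℂ) - (φ : ℂ))) ≠ 1)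
    (f g : ℂ)
    (hg : g = f / (Complex.exp (-Complex.I * ((k : ℂ) * (η : ℂ) - (φ : ℂ))) - 1))
    (Γ : ℕ → ℂ) (hΓ0 : Tendsto Γ atTop (nhds 0))
    (hΓbv : Summable (fun n => ‖Complex.exp (Complex.I * (φ : ℂ)) * Γ (n + 1) - Γ n‖))
    (θ : ℕ → ℝ) :
    ∃ S : ℂ,
      Tendsto
        (fun N => ∑ n ∈ Finset.range N,
          (f * Γ n * Complex.exp (Complex.I * (k : ℂ) * (((n : ℂ) + 1) * (η : ℂ) + 2 * (θ n : ℂ))) -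
            g * Γ n * Complex.exp (Complex.I * (k : ℂ) * (((n : ℂ) + 1) * (η : ℂ) + 2 * (θ n : ℂ))) *
              (Complex.exp (2 * Complex.I * (k : ℂ) * ((θ (n + 1) : ℂ) - (θ n : ℂ))) - 1)))
        atTop (nhds S) ∧
      ‖S‖ ≤
        2 * ‖g‖ *
          ∑' n : ℕ, ‖Complex.exp (Complex.I * (φ : ℂ)) * Γ (n + 1) - Γ n‖ := by
  have hfg : f = g * (exp (-I * (k * η - φ)) - 1) := by
    rw [hg, div_mul_cancel₀ f (sub_ne_zero.mpr hkφ)]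
  have hw : ‖exp (I * φ)‖ = 1 := by simp [norm_exp]
  have hu : ‖exp (-(I * k * η))‖ = 1 := by simp [norm_exp]
  obtain ⟨S, hS, hSle⟩ := exists_tendsto_sum_range_sub_succ_smul hw.le
    (fun n => (norm_phase k η θ n).le) hΓ0 hΓbv
  refine ⟨g * exp (-(I * k * η)) * S, ?_, ?_⟩
  · refine (hS.const_mul _).congr fun N => ?_
    rw [Finset.mul_sum]
    refine Finset.sum_congr rfl fun n _ => ?_
    rw [smul_eq_mul, ← summand_eq_sub_phase_mul k η φ hfg]
    rfl
  · rw [norm_mul, norm_mul, hu, mul_one, mul_assoc, mul_left_comm]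
    exact mul_le_mul_of_nonneg_left hSle (norm_nonneg g)
end

section
/- Let k be an integer, η, φ real numbers, f a complex number, and g a complex number with g · (e^{−i(kη−φ)} − 1) = f. Let Γ : ℕ → ℂ and θ : ℕ → ℝ be arbitrary sequences, and let M, N be natural numbers with M < N. Then | Σ_{n=M}^{N−1} ( f · Γ_n · e^{ik[(n+1)η + 2θ_n]} − g · Γ_n · e^{ik[(n+1)η + 2θ_n]} · ( e^{2ik(θ_{n+1} − θ_n)} − 1 ) ) | ≤ |g| · ( |Γ_M| + |Γ_{N−1}| + Σ_{n=M}^{N−2} |e^{iφ} Γ_{n+1} − Γ_n| ). -/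
/-!
Substituting `f = g (e^{-i(kη-φ)} - 1)` and writing `u n = e^{ik(nη + 2θ_n)}`, the `n`-th summand
becomes `g (e^{iφ} Γ_n u_n - Γ_n u_{n+1})`. Summation by parts turns the sum into the boundary terms
`e^{iφ} Γ_M u_M - Γ_{N-1} u_N` plus `Σ (e^{iφ} Γ_{n+1} - Γ_n) u_{n+1}`, and `|u n| = |e^{iφ}| = 1`.
-/

open Finset

theorem Finset.sum_Ico_succ_sub_eq {G : Type*} [AddCommGroup G] (a b : ℕ → G) {M N : ℕ}
    (hMN : M ≤ N) :
    ∑ n ∈ Ico M (N + 1), (a n - b n) =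
      a M - b N + ∑ n ∈ Ico M N, (a (n + 1) - b n) := by
  rw [sum_sub_distrib, sum_sub_distrib, sum_eq_sum_Ico_succ_bot (Nat.lt_succ_of_le hMN),
    sum_Ico_succ_top hMN, sum_Ico_add']
  abel

theorem norm_sum_Ico_mul_sub_mul_succ_le {R : Type*} [SeminormedRing R] (w : R) (Γ u : ℕ → R)
    (hw : ‖w‖ ≤ 1) (hu : ∀ n, ‖u n‖ ≤ 1) {M N : ℕ} (hMN : M ≤ N) :
    ‖∑ n ∈ Ico M (N + 1), (w * Γ n * u n - Γ n * u (n + 1))‖ ≤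
      ‖Γ M‖ + ‖Γ N‖ + ∑ n ∈ Ico M N, ‖w * Γ (n + 1) - Γ n‖ := by
  have bound {x y : R} (hy : ‖y‖ ≤ 1) : ‖x * y‖ ≤ ‖x‖ :=
    (norm_mul_le x y).trans (mul_le_of_le_one_right (norm_nonneg x) hy)
  rw [sum_Ico_succ_sub_eq _ _ hMN]
  calc _ ≤ ‖w * Γ M * u M‖ + ‖Γ N * u (N + 1)‖ +
          ∑ n ∈ Ico M N, ‖(w * Γ (n + 1) - Γ n) * u (n + 1)‖ := by
        simp only [sub_mul]
        exact (norm_add_le _ _).trans (add_le_add (norm_sub_le _ _) (norm_sum_le _ _))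
    _ ≤ _ := by
        refine add_le_add (add_le_add ?_ (bound (hu _))) (sum_le_sum fun n _ => bound (hu _))
        exact (bound (hu M)).trans
          ((norm_mul_le _ _).trans (mul_le_of_le_one_left (norm_nonneg _) hw))

open Complex in
theorem summand_eq_mul_sub_shift (k : ℤ) (η φ : ℝ) (g : ℂ) (Γ : ℕ → ℂ) (θ : ℕ → ℝ) (n : ℕ) :
    g * (exp (-I * (k * η - φ)) - 1) * Γ n * exp (I * k * ((n + 1) * η + 2 * θ n)) -
        g * Γ n * exp (I * k * ((n + 1) * η + 2 * θ n)) *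
          (exp (2 * I * k * (θ (n + 1) - θ n)) - 1) =
      g * (exp (I * φ) * Γ n * exp (I * ↑(k * (n * η + 2 * θ n))) -
        Γ n * exp (I * ↑(k * ((n + 1 : ℕ) * η + 2 * θ (n + 1))))) := by
  have h_left : exp (-I * (k * η - φ)) * exp (I * k * ((n + 1) * η + 2 * θ n)) =
      exp (I * φ) * exp (I * ↑(k * (n * η + 2 * θ n))) := by
    rw [← exp_add, ← exp_add]; congr 1; push_cast; ring
  have h_right : exp (I * k * ((n + 1) * η + 2 * θ n)) * exp (2 * I * k * (θ (n + 1) - θ n)) =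
      exp (I * ↑(k * ((n + 1 : ℕ) * η + 2 * θ (n + 1)))) := by
    rw [← exp_add]; congr 1; push_cast; ring
  linear_combination (g * Γ n) * h_left - (g * Γ n) * h_right

/-- Partial-sum bound: if `g (e^{−i(kη−φ)} − 1) = f` and `M < N`, then
`|Σ_{n=M}^{N−1} ( f Γ_n e^{ik[(n+1)η+2θ_n]} − g Γ_n e^{ik[(n+1)η+2θ_n]} (e^{2ik(θ_{n+1}−θ_n)} − 1) )|
  ≤ |g| ( |Γ_M| + |Γ_{N−1}| + Σ_{n=M}^{N−2} |e^{iφ}Γ_{n+1} − Γ_n| )`. -/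
theorem stmt_12 (k : ℤ) (η φ : ℝ) (f g : ℂ)
    (hg : g * (Complex.exp (-Complex.I * ((k : ℂ) * (η : ℂ) - (φ : ℂ))) - 1) = f)
    (Γ : ℕ → ℂ) (θ : ℕ → ℝ) (M N : ℕ) (hMN : M < N) :
    ‖(∑ n ∈ Finset.Ico M N,
          (f * Γ n * Complex.exp (Complex.I * (k : ℂ) * (((n : ℂ) + 1) * (η : ℂ) + 2 * (θ n : ℂ))) -
            g * Γ n * Complex.exp (Complex.I * (k : ℂ) * (((n : ℂ) + 1) * (η : ℂ) + 2 * (θ n : ℂ))) *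
              (Complex.exp (2 * Complex.I * (k : ℂ) * ((θ (n + 1) : ℂ) - (θ n : ℂ))) - 1)))‖ ≤
      ‖g‖ *
        (‖Γ M‖ + ‖Γ (N - 1)‖ +
          ∑ n ∈ Finset.Ico M (N - 1),
            ‖Complex.exp (Complex.I * (φ : ℂ)) * Γ (n + 1) - Γ n‖) := by
  subst hg
  obtain ⟨N, rfl⟩ : ∃ N', N = N' + 1 := ⟨N - 1, by omega⟩
  simp_rw [summand_eq_mul_sub_shift, ← mul_sum, norm_mul, Nat.add_sub_cancel]
  gcongr
  exact (norm_sum_Ico_mul_sub_mul_succ_le (Complex.exp (Complex.I * φ)) Γ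
    (fun n : ℕ => Complex.exp (Complex.I * ↑((k : ℝ) * (n * η + 2 * θ n))))
    (Complex.norm_exp_I_mul_ofReal φ).le (fun _ => (Complex.norm_exp_I_mul_ofReal _).le)
    (Nat.le_of_lt_succ hMN) :)
end
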